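/- Let L be a differential graded Lie algebra and Z_{n,j,k} as in Getzler's Lemma (an iterated-bracket sum over S_{n+1} involving two D insertions, graded symmetrized with Koszul signs). If j + k + 1 < n then Z_{n,j,k} = Z_{n,j+1,k} + Z_{n,j,k+1}. -/

import Mathlib

/-!
Let `C` be the cycle `j+1 ↦ j+2 ↦ ⋯ ↦ j+k+2 ↦ j+1` of positions. For every `τ ∈ S_{n+1}`, the
bracket in the summand of `Z_{n,j,k}` for `τ C` has the shape `[[X, Y], E]` with
`X = […[Da_{τ_0}, a_{τ_1}], …, a_{τ_j}]`, `Y = […[Da_{τ_{j+2}}, a_{τ_{j+3}}], …, a_{τ_{j+k+2}}]`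
and `E = a_{τ_{j+1}}`. The graded Jacobi identity gives `[[X, Y], E] = [X, [Y, E]] ± [[X, E], Y]`;
the first term is the summand of `Z_{n,j,k+1}` for `τ C` and the second that of `Z_{n,j+1,k}` for
`τ`. The signs match because Koszul signs form a cocycle, `ε(τ C) = ε(τ) ε_τ(C)`, where `ε_τ(C)`
is the sign of moving `a_{τ_{j+1}}` past `a_{τ_{j+2}}, …, a_{τ_{j+k+2}}`. Summing over `τ` gives
the identity.
-/

section

open Finset
open Fin.NatCast

variable {V : Type*} [AddCommGroup V] [Module ℚ V]

/-- The Koszul sign of a permutation `σ` of `n+1` graded elements with degrees `d`: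
the product over inversions `p < q`, `σ p > σ q` of `(-1)^{|a_{σ p}||a_{σ q}|}`. -/
noncomputable def koszulSgn (n : ℕ) (d : Fin (n + 1) → ℤ)
    (σ : Equiv.Perm (Fin (n + 1))) : ℚ :=
  ∏ pq ∈ Finset.univ.filter
      (fun pq : Fin (n + 1) × Fin (n + 1) => pq.1 < pq.2 ∧ σ pq.2 < σ pq.1),
    (-1 : ℚ) ^ (d (σ pq.1) * d (σ pq.2))

/-- The iterated left bracket `[…[[x, g lo], g (lo+1)], …, g (lo+len-1)]`. -/
def iterBr (br : V →ₗ[ℚ] V →ₗ[ℚ] V) (x : V) (g : ℕ → V) (lo len : ℕ) : V :=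
  ((List.range' lo len).map g).foldl (fun y z => br y z) x

/-- Getzler's expression `Z_{n,j,k}`: the sum over `π ∈ S_{n+1}` with Koszul signs and
the extra sign `(-1)^{|a_{π_1}|+⋯+|a_{π_j}|}` of the iterated bracket
`[…[[…[Da_{π_0},a_{π_1}],…,a_{π_j}], […[Da_{π_{j+1}},a_{π_{j+2}}],…,a_{π_{j+k+1}}]],…,a_{π_n}]`,
where `D` is `δ` in degree `1` and `0` elsewhere. -/
noncomputable def Zval (br : V →ₗ[ℚ] V →ₗ[ℚ] V) (δ : V →ₗ[ℚ] V)
    (n : ℕ) (d : Fin (n + 1) → ℤ) (a : Fin (n + 1) → V) (j k : ℕ) : V :=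
  ∑ σ : Equiv.Perm (Fin (n + 1)),
    (koszulSgn n d σ *
        (-1 : ℚ) ^ (∑ m ∈ Finset.Icc 1 j, d (σ (m : Fin (n + 1))))) •
      iterBr br
        (br (iterBr br (if d (σ 0) = 1 then δ (a (σ 0)) else 0)
                (fun m => a (σ (m : Fin (n + 1)))) 1 j)
            (iterBr br
              (if d (σ ((j + 1 : ℕ) : Fin (n + 1))) = 1
                then δ (a (σ ((j + 1 : ℕ) : Fin (n + 1)))) else 0)
              (fun m => a (σ (m : Fin (n + 1)))) (j + 2) k))
        (fun m => a (σ (m : Fin (n + 1)))) (j + k + 2) (n - (j + k + 1))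

theorem neg_one_zpow_eq_of_even_sub {α : Type*} [DivisionRing α] {m l : ℤ} (h : Even (m - l)) :
    (-1 : α) ^ m = (-1) ^ l := by
  rw [← sub_add_cancel m l, zpow_add₀ (neg_ne_zero.2 one_ne_zero), h.neg_one_zpow, one_mul]

theorem prod_zpow_eq_zpow_sum₀ {ι G₀ : Type*} [CommGroupWithZero G₀] {a : G₀} (ha : a ≠ 0)
    (s : Finset ι) (f : ι → ℤ) : ∏ i ∈ s, a ^ f i = a ^ ∑ i ∈ s, f i := by
  induction s using Finset.cons_induction with
  | empty => simp
  | cons i s hi ih => rw [prod_cons, sum_cons, ih, zpow_add₀ ha]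

theorem prod_lt_pairs_comp_perm {α M : Type*} [LinearOrder α] [Fintype α] [CommMonoid M]
    (c : Equiv.Perm α) {g : α → α → M} (hg : ∀ x y, g x y = g y x) :
    ∏ pq ∈ univ.filter (fun pq : α × α => pq.1 < pq.2), g (c pq.1) (c pq.2) =
      ∏ pq ∈ univ.filter (fun pq : α × α => pq.1 < pq.2), g pq.1 pq.2 := by
  refine prod_nbij' (fun pq => (min (c pq.1) (c pq.2), max (c pq.1) (c pq.2)))
    (fun pq => (min (c.symm pq.1) (c.symm pq.2), max (c.symm pq.1) (c.symm pq.2)))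
    ?_ ?_ ?_ ?_ ?_ <;> rintro ⟨p, q⟩ hpq <;> simp only [mem_filter, mem_univ, true_and] at hpq ⊢
  · exact min_lt_max.2 (c.injective.ne hpq.ne)
  · exact min_lt_max.2 (c.symm.injective.ne hpq.ne)
  · rcases le_total (c p) (c q) with h | h <;> simp [h, hpq.le]
  · rcases le_total (c.symm p) (c.symm q) with h | h <;> simp [h, hpq.le]
  · rcases le_total (c p) (c q) with h | h <;> simp [h, hg]

theorem Fin.val_cycleIcc {n : ℕ} {i j : Fin (n + 1)} (hij : i ≤ j) (x : Fin (n + 1)) :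
    (Fin.cycleIcc i j x).val =
      if x = j then i.val else if i ≤ x ∧ x < j then x.val + 1 else x.val := by
  rcases lt_or_ge x i with hxi | hix
  · rw [Fin.cycleIcc_of_lt hxi, if_neg (by omega), if_neg (by omega)]
  rcases lt_or_ge j x with hjx | hxj
  · rw [Fin.cycleIcc_of_gt hjx, if_neg (by omega), if_neg (by omega)]
  rw [Fin.cycleIcc_of_le_of_le hix hxj]
  split_ifs with h1 h2
  · rfl
  · rw [Fin.val_add_one_of_lt (h2.2.trans_le j.le_last)]
  · omega

theorem Fin.val_natCast_of_le {n p : ℕ} (h : p ≤ n) : ((p : Fin (n + 1)) : ℕ) = p :=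
  Fin.val_cast_of_lt (Nat.lt_succ_of_le h)

theorem Fin.cycleIcc_natCast {n i j m : ℕ} (hij : i ≤ j) (hj : j ≤ n) (hm : m ≤ n) :
    Fin.cycleIcc (i : Fin (n + 1)) (j : Fin (n + 1)) (m : Fin (n + 1)) =
      ((if m = j then i else if i ≤ m ∧ m < j then m + 1 else m : ℕ) : Fin (n + 1)) := by
  ext
  rw [Fin.val_cycleIcc
    (Fin.le_def.2 (by rwa [Fin.val_natCast_of_le (hij.trans hj), Fin.val_natCast_of_le hj]))]
  simp only [Fin.ext_iff, Fin.le_def, Fin.lt_def, Fin.val_natCast_of_le (hij.trans hj),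
    Fin.val_natCast_of_le hj, Fin.val_natCast_of_le hm]
  split_ifs <;> rw [Fin.val_natCast_of_le (by omega)]

theorem koszulSgn_eq_prod_ite (n : ℕ) (d : Fin (n + 1) → ℤ) (σ : Equiv.Perm (Fin (n + 1))) :
    koszulSgn n d σ = ∏ pq ∈ univ.filter (fun pq : Fin (n + 1) × Fin (n + 1) => pq.1 < pq.2),
      if σ pq.1 < σ pq.2 then 1 else (-1 : ℚ) ^ (d (σ pq.1) * d (σ pq.2)) := by
  rw [koszulSgn, ← filter_filter, prod_filter]
  refine prod_congr rfl fun pq hpq => ?_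
  have hne : σ pq.1 ≠ σ pq.2 := σ.injective.ne (mem_filter.1 hpq).2.ne
  by_cases h : σ pq.1 < σ pq.2
  · simp [h, h.not_gt]
  · simp [h, lt_of_le_of_ne (not_lt.1 h) hne.symm]

theorem koszulSgn_mul_eq_prod (n : ℕ) (d : Fin (n + 1) → ℤ) (σ c : Equiv.Perm (Fin (n + 1))) :
    koszulSgn n d (σ * c) = ∏ pq ∈ univ.filter (fun pq : Fin (n + 1) × Fin (n + 1) => pq.1 < pq.2),
      (if σ pq.1 < σ pq.2 then 1 else (-1 : ℚ) ^ (d (σ pq.1) * d (σ pq.2))) *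
        (if c.symm pq.1 < c.symm pq.2 then 1 else (-1 : ℚ) ^ (d (σ pq.1) * d (σ pq.2))) := by
  let s : Fin (n + 1) → Fin (n + 1) → ℚ := fun x y => (-1 : ℚ) ^ (d (σ x) * d (σ y))
  let g : Fin (n + 1) → Fin (n + 1) → ℚ := fun x y =>
    if (c.symm x < c.symm y ↔ σ x < σ y) then 1 else s x y
  have hg : ∀ x y, g x y = g y x := by
    intro x y
    rcases eq_or_ne x y with rfl | hxy
    · rfl
    have h₁ : c.symm x ≠ c.symm y := c.symm.injective.ne hxy
    have h₂ : σ x ≠ σ y := σ.injective.ne hxy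
    rcases h₁.lt_or_gt with h | h <;> rcases h₂.lt_or_gt with h' | h' <;>
      simp [g, s, h, h', h.not_gt, h'.not_gt, mul_comm]
  calc koszulSgn n d (σ * c)
      = ∏ pq ∈ univ.filter (fun pq : Fin (n + 1) × Fin (n + 1) => pq.1 < pq.2),
          g (c pq.1) (c pq.2) := by
        rw [koszulSgn_eq_prod_ite]
        refine prod_congr rfl fun pq hpq => ?_
        simp [g, s, (mem_filter.1 hpq).2]
        -- the two sides differ only in their `Decidable` instances
        congr 1
    _ = ∏ pq ∈ univ.filter (fun pq : Fin (n + 1) × Fin (n + 1) => pq.1 < pq.2), g pq.1 pq.2 :=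
        prod_lt_pairs_comp_perm c hg
    _ = _ := by
        refine prod_congr rfl fun pq _ => ?_
        -- the two inversion conditions combine into one because each factor `s x y` squares to `1`
        have hs : ∀ m : ℤ, (-1 : ℚ) ^ m * (-1) ^ m = 1 := fun m => by simp [← mul_zpow]
        by_cases h₁ : σ pq.1 < σ pq.2 <;> by_cases h₂ : c.symm pq.1 < c.symm pq.2 <;>
          simp [g, s, h₁, h₂, hs]

theorem koszulSgn_mul (n : ℕ) (d : Fin (n + 1) → ℤ) (σ c : Equiv.Perm (Fin (n + 1))) :
    koszulSgn n d (σ * c) = koszulSgn n d σ * koszulSgn n (d ∘ σ) c := by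
  have hc := koszulSgn_mul_eq_prod n (d ∘ σ) 1 c
  rw [one_mul] at hc
  rw [koszulSgn_mul_eq_prod, prod_mul_distrib, koszulSgn_eq_prod_ite, hc]
  congr 1
  refine prod_congr rfl fun pq hpq => ?_
  simp [(mem_filter.1 hpq).2]

theorem Fin.filter_inversions_cycleIcc {n i j : ℕ} (hij : i ≤ j) (hj : j ≤ n) :
    univ.filter (fun pq : Fin (n + 1) × Fin (n + 1) => pq.1 < pq.2 ∧
      Fin.cycleIcc (i : Fin (n + 1)) j pq.2 < Fin.cycleIcc (i : Fin (n + 1)) j pq.1) =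
      (Ico i j).image (fun m : ℕ => ((m : Fin (n + 1)), (j : Fin (n + 1)))) := by
  have hi : i ≤ n := hij.trans hj
  have hle : (i : Fin (n + 1)) ≤ j :=
    Fin.le_def.2 (by rwa [Fin.val_natCast_of_le hi, Fin.val_natCast_of_le hj])
  ext ⟨p, q⟩
  simp only [mem_filter, mem_univ, true_and, mem_image, mem_Ico, Prod.mk.injEq, Fin.lt_def,
    Fin.val_cycleIcc hle, Fin.ext_iff, Fin.le_def, Fin.val_natCast_of_le hi,
    Fin.val_natCast_of_le hj]
  constructor
  · rintro ⟨hpq, hC⟩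
    refine ⟨p, ?_, by simp, ?_⟩ <;> split_ifs at hC <;> omega
  · rintro ⟨m, hm, hp, hq⟩
    rw [Fin.val_natCast_of_le (by omega)] at hp
    split_ifs <;> omega

theorem koszulSgn_cycleIcc (n : ℕ) (e : Fin (n + 1) → ℤ) {i j : ℕ} (hij : i ≤ j) (hj : j ≤ n) :
    koszulSgn n e (Fin.cycleIcc (i : Fin (n + 1)) (j : Fin (n + 1))) =
      (-1 : ℚ) ^ ((∑ m ∈ Ico (i + 1) (j + 1), e m) * e i) := by
  rw [koszulSgn, Fin.filter_inversions_cycleIcc hij hj, prod_image, ← sum_Ico_add', sum_mul,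
    ← prod_zpow_eq_zpow_sum₀ (by norm_num)]
  · refine prod_congr rfl fun m hm => ?_
    rw [mem_Ico] at hm
    rw [Fin.cycleIcc_natCast hij hj (by omega), Fin.cycleIcc_natCast hij hj hj, if_neg (by omega),
      if_pos hm, if_pos rfl]
  · intro x hx y hy hxy
    simp only [coe_Ico, Set.mem_Ico] at hx hy
    simpa [Fin.val_natCast_of_le (show x ≤ n by omega), Fin.val_natCast_of_le (show y ≤ n by omega)]
      using congrArg (fun pq => pq.1.val) hxy

section iterBr

variable (br : V →ₗ[ℚ] V →ₗ[ℚ] V)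

theorem iterBr_succ (x : V) (g : ℕ → V) (lo len : ℕ) :
    iterBr br x g lo (len + 1) = br (iterBr br x g lo len) (g (lo + len)) := by
  simp [iterBr, List.range'_concat]

theorem iterBr_succ' (x : V) (g : ℕ → V) (lo len : ℕ) :
    iterBr br x g lo (len + 1) = iterBr br (br x (g lo)) g (lo + 1) len := by
  simp [iterBr, List.range'_succ]

theorem iterBr_add (x y : V) (g : ℕ → V) (lo len : ℕ) :
    iterBr br (x + y) g lo len = iterBr br x g lo len + iterBr br y g lo len := by
  induction len with
  | zero => rfl
  | succ len ih => rw [iterBr_succ, iterBr_succ, iterBr_succ, ih, map_add, LinearMap.add_apply]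

theorem iterBr_smul (c : ℚ) (x : V) (g : ℕ → V) (lo len : ℕ) :
    iterBr br (c • x) g lo len = c • iterBr br x g lo len := by
  induction len with
  | zero => rfl
  | succ len ih => rw [iterBr_succ, iterBr_succ, ih, map_smul, LinearMap.smul_apply]

theorem iterBr_congr (x : V) {g₁ g₂ : ℕ → V} {lo₁ lo₂ : ℕ} (len : ℕ)
    (h : ∀ i < len, g₁ (lo₁ + i) = g₂ (lo₂ + i)) :
    iterBr br x g₁ lo₁ len = iterBr br x g₂ lo₂ len := by
  induction len with
  | zero => rfl
  | succ len ih =>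
    rw [iterBr_succ, iterBr_succ, ih fun i hi => h i (by omega), h len (by omega)]

theorem iterBr_mem (H : ℤ → Submodule ℚ V)
    (hbr_mem : ∀ {i j : ℤ} {a b : V}, a ∈ H i → b ∈ H j → br a b ∈ H (i + j))
    {x : V} {g : ℕ → V} {dx : ℤ} {e : ℕ → ℤ} {lo : ℕ} (len : ℕ) (hx : x ∈ H dx)
    (hg : ∀ i, g i ∈ H (e i)) :
    iterBr br x g lo len ∈ H (dx + ∑ i ∈ Ico lo (lo + len), e i) := by
  induction len with
  | zero => simpa [iterBr] using hx
  | succ len ih =>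
    rw [iterBr_succ, ← add_assoc, sum_Ico_succ_top (by omega), ← add_assoc]
    exact hbr_mem ih (hg _)

end iterBr

structure IsGradedLieBracket (H : ℤ → Submodule ℚ V) (br : V →ₗ[ℚ] V →ₗ[ℚ] V) : Prop where
  mem : ∀ {i j : ℤ} {a b : V}, a ∈ H i → b ∈ H j → br a b ∈ H (i + j)
  anti : ∀ {i j : ℤ} {a b : V}, a ∈ H i → b ∈ H j → br a b = -((-1 : ℚ) ^ (i * j) • br b a)
  jacobi : ∀ {i j : ℤ} {a b : V}, a ∈ H i → b ∈ H j → ∀ c : V,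
    br a (br b c) = br (br a b) c + (-1 : ℚ) ^ (i * j) • br b (br a c)

theorem IsGradedLieBracket.br_br_eq_br_br_add_br_br {H : ℤ → Submodule ℚ V}
    {br : V →ₗ[ℚ] V →ₗ[ℚ] V} (hL : IsGradedLieBracket H br) {x y z : V} {dx dy dz : ℤ}
    (hx : x ∈ H dx) (hy : y ∈ H dy) (hz : z ∈ H dz) :
    br (br x y) z = br x (br y z) + (-1 : ℚ) ^ (dy * dz) • br (br x z) y := by
  have hsign : (-1 : ℚ) ^ (dx * dy) * (-1) ^ (dy * (dx + dz)) = (-1) ^ (dy * dz) := by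
    rw [← zpow_add₀ (by norm_num)]
    exact neg_one_zpow_eq_of_even_sub ⟨dx * dy, by ring⟩
  rw [hL.jacobi hx hy z, hL.anti hy (hL.mem hx hz), smul_neg, smul_smul, hsign]
  abel

/-- `[…[[D b_i, b_{i+1}], b_{i+2}], …, b_{i+len}]`, with `D` read off the degrees `e` as in
`Zval`. -/
def iterBrD (br : V →ₗ[ℚ] V →ₗ[ℚ] V) (δ : V →ₗ[ℚ] V) (n : ℕ) (e : Fin (n + 1) → ℤ)
    (b : Fin (n + 1) → V) (i len : ℕ) : V :=
  iterBr br (if e (i : Fin (n + 1)) = 1 then δ (b i) else 0) (fun m => b m) (i + 1) len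

/-- The bracket of `Zval` for `π = id`, evaluated on the sequence `b` with degrees `e`. -/
def bracketWord (br : V →ₗ[ℚ] V →ₗ[ℚ] V) (δ : V →ₗ[ℚ] V) (n : ℕ) (e : Fin (n + 1) → ℤ)
    (b : Fin (n + 1) → V) (j k : ℕ) : V :=
  iterBr br (br (iterBrD br δ n e b 0 j) (iterBrD br δ n e b (j + 1) k))
    (fun m => b m) (j + k + 2) (n - (j + k + 1))

noncomputable def Zterm (br : V →ₗ[ℚ] V →ₗ[ℚ] V) (δ : V →ₗ[ℚ] V) (n : ℕ) (d : Fin (n + 1) → ℤ)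
    (a : Fin (n + 1) → V) (j k : ℕ) (σ : Equiv.Perm (Fin (n + 1))) : V :=
  (koszulSgn n d σ * (-1 : ℚ) ^ (∑ m ∈ Icc 1 j, d (σ (m : Fin (n + 1))))) •
    bracketWord br δ n (d ∘ σ) (a ∘ σ) j k

theorem Zval_eq_sum_Zterm (br : V →ₗ[ℚ] V →ₗ[ℚ] V) (δ : V →ₗ[ℚ] V) (n : ℕ)
    (d : Fin (n + 1) → ℤ) (a : Fin (n + 1) → V) (j k : ℕ) :
    Zval br δ n d a j k = ∑ σ : Equiv.Perm (Fin (n + 1)), Zterm br δ n d a j k σ :=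
  rfl

section bracketWord

variable (br : V →ₗ[ℚ] V →ₗ[ℚ] V) (δ : V →ₗ[ℚ] V) {n : ℕ} (e : Fin (n + 1) → ℤ)
  (b : Fin (n + 1) → V)

theorem iterBrD_succ (i len : ℕ) :
    iterBrD br δ n e b i (len + 1) =
      br (iterBrD br δ n e b i len) (b ((i + 1 + len : ℕ) : Fin (n + 1))) :=
  iterBr_succ br _ _ _ _

theorem iterBrD_mem (H : ℤ → Submodule ℚ V)
    (hbr_mem : ∀ {i j : ℤ} {a b : V}, a ∈ H i → b ∈ H j → br a b ∈ H (i + j))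
    (hδ_mem : ∀ {i : ℤ} {a : V}, a ∈ H i → δ a ∈ H (i - 1)) (hb : ∀ p, b p ∈ H (e p))
    (i len : ℕ) : iterBrD br δ n e b i len ∈ H (∑ m ∈ Ico i (i + 1 + len), e m - 1) := by
  have hD : (if e (i : Fin (n + 1)) = 1 then δ (b i) else 0) ∈ H (e i - 1) := by
    split_ifs
    exacts [hδ_mem (hb _), zero_mem _]
  rw [sum_eq_sum_Ico_succ_bot (by omega), add_sub_right_comm]
  exact iterBr_mem br H hbr_mem (e := fun m => e m) len hD fun m => hb m

variable {j k : ℕ}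

theorem bracketWord_of_le (hjk : j + k + 2 ≤ n) :
    bracketWord br δ n e b j k =
      iterBr br (br (br (iterBrD br δ n e b 0 j) (iterBrD br δ n e b (j + 1) k))
        (b ((j + k + 2 : ℕ) : Fin (n + 1)))) (fun m => b m) (j + k + 3) (n - (j + k + 2)) := by
  rw [bracketWord, show n - (j + k + 1) = n - (j + k + 2) + 1 by omega, iterBr_succ']

theorem bracketWord_succ_right :
    bracketWord br δ n e b j (k + 1) =
      iterBr br (br (iterBrD br δ n e b 0 j)
        (br (iterBrD br δ n e b (j + 1) k) (b ((j + k + 2 : ℕ) : Fin (n + 1)))))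
        (fun m => b m) (j + k + 3) (n - (j + k + 2)) := by
  rw [bracketWord, iterBrD_succ, show j + 1 + 1 + k = j + k + 2 by omega,
    show j + (k + 1) + 2 = j + k + 3 by omega,
    show n - (j + (k + 1) + 1) = n - (j + k + 2) by omega]

theorem bracketWord_succ_left :
    bracketWord br δ n e b (j + 1) k =
      iterBr br (br (br (iterBrD br δ n e b 0 j) (b ((j + 1 : ℕ) : Fin (n + 1))))
        (iterBrD br δ n e b (j + 2) k)) (fun m => b m) (j + k + 3) (n - (j + k + 2)) := by
  rw [bracketWord, iterBrD_succ, show 0 + 1 + j = j + 1 by omega,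
    show j + 1 + k + 2 = j + k + 3 by omega, show n - (j + 1 + k + 1) = n - (j + k + 2) by omega]

end bracketWord

theorem bracketWord_comp_cycleIcc {H : ℤ → Submodule ℚ V} {br : V →ₗ[ℚ] V →ₗ[ℚ] V}
    (hL : IsGradedLieBracket H br) {δ : V →ₗ[ℚ] V}
    (hδ_mem : ∀ {i : ℤ} {a : V}, a ∈ H i → δ a ∈ H (i - 1))
    {n : ℕ} (e : Fin (n + 1) → ℤ) (b : Fin (n + 1) → V) (hb : ∀ p, b p ∈ H (e p))
    {j k : ℕ} (hjk : j + k + 2 ≤ n) :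
    let C := Fin.cycleIcc ((j + 1 : ℕ) : Fin (n + 1)) ((j + k + 2 : ℕ) : Fin (n + 1))
    bracketWord br δ n (e ∘ C) (b ∘ C) j k =
      bracketWord br δ n (e ∘ C) (b ∘ C) j (k + 1) +
        (-1 : ℚ) ^ ((∑ m ∈ Ico (j + 2) (j + k + 3), e m - 1) * e ((j + 1 : ℕ) : Fin (n + 1))) •
          bracketWord br δ n e b (j + 1) k := by
  intro C
  have hC : ∀ m ≤ n, C m = ((if m = j + k + 2 then j + 1
      else if j + 1 ≤ m ∧ m < j + k + 2 then m + 1 else m : ℕ) : Fin (n + 1)) :=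
    fun m hm => Fin.cycleIcc_natCast (by omega) hjk hm
  have hX : iterBrD br δ n (e ∘ C) (b ∘ C) 0 j = iterBrD br δ n e b 0 j := by
    simp only [iterBrD, Function.comp_apply, hC 0 (by omega), if_neg (show 0 ≠ j + k + 2 by omega),
      if_neg (show ¬(j + 1 ≤ 0 ∧ 0 < j + k + 2) by omega)]
    exact iterBr_congr br _ j fun i hi => by
      rw [hC _ (by omega), if_neg (by omega), if_neg (by omega)]
  have hY : iterBrD br δ n (e ∘ C) (b ∘ C) (j + 1) k = iterBrD br δ n e b (j + 2) k := by
    simp only [iterBrD, Function.comp_apply, hC (j + 1) (by omega),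
      if_neg (show j + 1 ≠ j + k + 2 by omega),
      if_pos (show j + 1 ≤ j + 1 ∧ j + 1 < j + k + 2 by omega)]
    exact iterBr_congr br _ k fun i hi => by
      rw [hC _ (by omega), if_neg (by omega), if_pos (by omega),
        show j + 1 + 1 + i + 1 = j + 2 + 1 + i by omega]
  have hE : (b ∘ C) ((j + k + 2 : ℕ) : Fin (n + 1)) = b ((j + 1 : ℕ) : Fin (n + 1)) := by
    rw [Function.comp_apply, hC _ hjk, if_pos rfl]
  have hR : ∀ t, iterBr br t (fun m => (b ∘ C) m) (j + k + 3) (n - (j + k + 2)) =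
      iterBr br t (fun m => b m) (j + k + 3) (n - (j + k + 2)) := fun t =>
    iterBr_congr br t _ fun i hi => by
      rw [Function.comp_apply, hC _ (by omega), if_neg (by omega), if_neg (by omega)]
  have hYmem := iterBrD_mem br δ e b H hL.mem hδ_mem hb (j + 2) k
  rw [show j + 2 + 1 + k = j + k + 3 by omega] at hYmem
  rw [bracketWord_of_le _ _ _ _ hjk, bracketWord_succ_right, bracketWord_succ_left, hX, hY, hE, hR,
    hR,
    hL.br_br_eq_br_br_add_br_br (iterBrD_mem br δ e b H hL.mem hδ_mem hb 0 j) hYmem (hb _),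
    iterBr_add, iterBr_smul]

theorem Zterm_mul_cycleIcc {H : ℤ → Submodule ℚ V} {br : V →ₗ[ℚ] V →ₗ[ℚ] V}
    (hL : IsGradedLieBracket H br) {δ : V →ₗ[ℚ] V}
    (hδ_mem : ∀ {i : ℤ} {a : V}, a ∈ H i → δ a ∈ H (i - 1))
    {n : ℕ} (d : Fin (n + 1) → ℤ) (a : Fin (n + 1) → V) (ha : ∀ p, a p ∈ H (d p))
    {j k : ℕ} (hjk : j + k + 2 ≤ n) (τ : Equiv.Perm (Fin (n + 1))) :
    let C := Fin.cycleIcc ((j + 1 : ℕ) : Fin (n + 1)) ((j + k + 2 : ℕ) : Fin (n + 1))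
    Zterm br δ n d a j k (τ * C) =
      Zterm br δ n d a (j + 1) k τ + Zterm br δ n d a j (k + 1) (τ * C) := by
  intro C
  simp only [Zterm, Equiv.Perm.coe_mul, ← Function.comp_assoc]
  rw [bracketWord_comp_cycleIcc hL hδ_mem (d ∘ τ) (a ∘ τ) (fun p => ha _) hjk, smul_add, smul_smul,
    add_comm]
  congr 2
  have hfix : ∑ m ∈ Icc 1 j, d ((τ ∘ C) (m : Fin (n + 1))) = ∑ m ∈ Icc 1 j, d (τ m) :=
    sum_congr rfl fun m hm => by
      rw [mem_Icc] at hm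
      rw [Function.comp_apply, Fin.cycleIcc_natCast (by omega) hjk (by omega), if_neg (by omega),
        if_neg (by omega)]
  rw [koszulSgn_mul, koszulSgn_cycleIcc _ _ (by omega) hjk, hfix, sum_Icc_succ_top (by omega)]
  simp only [Function.comp_apply, mul_assoc, ← zpow_add₀ (show (-1 : ℚ) ≠ 0 by norm_num)]
  congr 1
  exact neg_one_zpow_eq_of_even_sub
    ⟨(∑ m ∈ Ico (j + 2) (j + k + 3), d (τ m) - 1) * d (τ (j + 1 : ℕ)), by ring⟩

theorem stmt_14_general (V : Type*) [AddCommGroup V] [Module ℚ V]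
    (H : ℤ → Submodule ℚ V)
    (br : V →ₗ[ℚ] V →ₗ[ℚ] V) (δ : V →ₗ[ℚ] V)
    (hbr_mem : ∀ {i j : ℤ} {a b : V}, a ∈ H i → b ∈ H j → br a b ∈ H (i + j))
    (hδ_mem : ∀ {i : ℤ} {a : V}, a ∈ H i → δ a ∈ H (i - 1))
    (hanti : ∀ {i j : ℤ} {a b : V}, a ∈ H i → b ∈ H j →
      br a b = -((-1 : ℚ) ^ (i * j) • br b a))
    (hjac : ∀ {i j : ℤ} {a b : V}, a ∈ H i → b ∈ H j → ∀ c : V,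
      br a (br b c) = br (br a b) c + (-1 : ℚ) ^ (i * j) • br b (br a c))
    (n : ℕ) (d : Fin (n + 1) → ℤ) (a : Fin (n + 1) → V)
    (ha : ∀ p, a p ∈ H (d p))
    (j k : ℕ) (hjk : j + k + 1 < n) :
    Zval br δ n d a j k = Zval br δ n d a (j + 1) k + Zval br δ n d a j (k + 1) := by
  have hL : IsGradedLieBracket H br := ⟨hbr_mem, hanti, hjac⟩
  let C := Fin.cycleIcc ((j + 1 : ℕ) : Fin (n + 1)) ((j + k + 2 : ℕ) : Fin (n + 1))
  calc Zval br δ n d a j k = ∑ τ, Zterm br δ n d a j k (τ * C) := by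
        rw [Zval_eq_sum_Zterm]
        exact (Fintype.sum_equiv (Equiv.mulRight C) _ _ fun _ => rfl).symm
    _ = ∑ τ, (Zterm br δ n d a (j + 1) k τ + Zterm br δ n d a j (k + 1) (τ * C)) :=
        sum_congr rfl fun τ _ => Zterm_mul_cycleIcc hL hδ_mem d a ha hjk τ
    _ = Zval br δ n d a (j + 1) k + Zval br δ n d a j (k + 1) := by
        rw [sum_add_distrib, Zval_eq_sum_Zterm, Zval_eq_sum_Zterm, Fintype.sum_equiv
          (Equiv.mulRight C) (fun τ => Zterm br δ n d a j (k + 1) (τ * C)) _ fun _ => rfl]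

/-- Getzler's Lemma 2, second part: `Z_{n,j,k} = Z_{n,j+1,k} + Z_{n,j,k+1}` for `j + k + 1 < n`, in any
differential graded Lie algebra over `ℚ` with homogeneous elements
`a_0, …, a_n` of degrees `d_0, …, d_n`. -/
theorem stmt_14 (V : Type*) [AddCommGroup V] [Module ℚ V]
    (H : ℤ → Submodule ℚ V)
    (br : V →ₗ[ℚ] V →ₗ[ℚ] V) (δ : V →ₗ[ℚ] V)
    (hbr_mem : ∀ {i j : ℤ} {a b : V}, a ∈ H i → b ∈ H j → br a b ∈ H (i + j))
    (hδ_mem : ∀ {i : ℤ} {a : V}, a ∈ H i → δ a ∈ H (i - 1))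
    (hδδ : ∀ a : V, δ (δ a) = 0)
    (hanti : ∀ {i j : ℤ} {a b : V}, a ∈ H i → b ∈ H j →
      br a b = -((-1 : ℚ) ^ (i * j) • br b a))
    (hjac : ∀ {i j : ℤ} {a b : V}, a ∈ H i → b ∈ H j → ∀ c : V,
      br a (br b c) = br (br a b) c + (-1 : ℚ) ^ (i * j) • br b (br a c))
    (hleib : ∀ {i : ℤ} {a : V}, a ∈ H i → ∀ b : V,
      δ (br a b) = br (δ a) b + (-1 : ℚ) ^ i • br a (δ b))
    (n : ℕ) (d : Fin (n + 1) → ℤ) (a : Fin (n + 1) → V)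
    (ha : ∀ p, a p ∈ H (d p))
    (j k : ℕ) (hjk : j + k + 1 < n) :
    Zval br δ n d a j k = Zval br δ n d a (j + 1) k + Zval br δ n d a j (k + 1) :=
  stmt_14_general V H br δ hbr_mem hδ_mem hanti hjac n d a ha j k hjk

end
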